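/- arXiv:1408.2593 — 2 statements merged into one kernel-verified Lean document; each statement's English description precedes it below -/
import Mathlib

section
/- Let G be a simplicial clique covered graph (SCCG) with connection set W, let F be a field, and let f : V(G) → F be a well-covered weighting of G. Then for every w ∈ W there is a choice of simplicial vertices, one from each simplicial clique in the complement of S({w}) in C(G) (that is, one from each simplicial clique contained in the closed neighborhood N[w]), such that f(w) equals the sum of the values of f at these chosen vertices. -/
open Finset

open scoped Classical

/-- The closed neighborhood `N[v]` of a vertex `v`: `v` together with its neighbors. -/
noncomputable def clNbhd {V : Type*} [Fintype V] (G : SimpleGraph V) (v : V) : Finset V :=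
  univ.filter (fun u => u = v ∨ G.Adj v u)

/-- The closed neighborhood `N[s]` of a finite set `s` of vertices. -/
noncomputable def clNbhdSet {V : Type*} [Fintype V] (G : SimpleGraph V) (s : Finset V) : Finset V :=
  s.biUnion (clNbhd G)

/-- A maximal clique of a graph: a clique not properly contained in any other clique. -/
def IsMaxClique {V : Type*} (G : SimpleGraph V) (C : Finset V) : Prop :=
  G.IsClique (C : Set V) ∧ ∀ D : Finset V, G.IsClique (D : Set V) → C ⊆ D → D = C

/-- A vertex is simplicial if its closed neighborhood is a maximal clique. -/
def IsSimplicialVertex {V : Type*} [Fintype V] (G : SimpleGraph V) (v : V) : Prop :=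
  IsMaxClique G (clNbhd G v)

/-- A simplicial clique: a maximal clique containing at least one simplicial vertex. -/
def IsSimplicialClique {V : Type*} [Fintype V] (G : SimpleGraph V) (C : Finset V) : Prop :=
  IsMaxClique G C ∧ ∃ v ∈ C, IsSimplicialVertex G v

/-- The set `C(G)` of simplicial cliques of `G`. -/
noncomputable def simpCliques {V : Type*} [Fintype V] (G : SimpleGraph V) : Finset (Finset V) :=
  univ.filter (fun C => IsSimplicialClique G C)

/-- The simplicial clique number `sc(G) = |C(G)|`. -/
noncomputable def scNum {V : Type*} [Fintype V] (G : SimpleGraph V) : ℕ :=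
  (simpCliques G).card

/-- A simplicial clique covered graph (SCCG): `C(G)` is nonempty and the union of the
simplicial cliques is the whole vertex set. -/
def IsSCCG {V : Type*} [Fintype V] (G : SimpleGraph V) : Prop :=
  (simpCliques G).Nonempty ∧ ∀ v : V, ∃ C ∈ simpCliques G, v ∈ C

/-- The connection set `W` of `G`: vertices belonging to at least two simplicial cliques. -/
noncomputable def connSet {V : Type*} [Fintype V] (G : SimpleGraph V) : Finset V :=
  univ.filter (fun v => 1 < ((simpCliques G).filter (fun C => v ∈ C)).card)

/-- `S(I)`: the set of simplicial cliques not contained in the closed neighborhood `N[I]`. -/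
noncomputable def sFam {V : Type*} [Fintype V] (G : SimpleGraph V) (I : Finset V) :
    Finset (Finset V) :=
  (simpCliques G).filter (fun C => ¬ C ⊆ clNbhdSet G I)

/-- An independent set of vertices: no two of its vertices are adjacent. -/
def IsIndep {V : Type*} (G : SimpleGraph V) (s : Finset V) : Prop :=
  ∀ u ∈ s, ∀ w ∈ s, ¬ G.Adj u w

/-- A maximal independent set: an independent set not properly contained in any
other independent set. -/
def IsMaxIndep {V : Type*} (G : SimpleGraph V) (s : Finset V) : Prop :=
  IsIndep G s ∧ ∀ t : Finset V, IsIndep G t → s ⊆ t → t = s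

/-- A well-covered weighting: a weighting whose sum over every maximal independent set
is the same. -/
def IsWCW {V : Type*} (G : SimpleGraph V) {F : Type*} [Field F] (f : V → F) : Prop :=
  ∀ s t : Finset V, IsMaxIndep G s → IsMaxIndep G t →
    ∑ v ∈ s, f v = ∑ v ∈ t, f v

/-- The well-covered space of `G` over `F`: the `F`-vector space of well-covered
weightings of `G`. -/
noncomputable def wcSpace {V : Type*} (G : SimpleGraph V) (F : Type*) [Field F] :
    Submodule F (V → F) where
  carrier := {f | IsWCW G f}
  zero_mem' := by
    intro s t _ _
    simp
  add_mem' := by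
    intro f g hf hg
    simp only [Set.mem_setOf_eq] at hf hg ⊢
    intro s t hs ht
    simp only [Pi.add_apply, Finset.sum_add_distrib]
    rw [hf s t hs ht, hg s t hs ht]
  smul_mem' := by
    intro c f hf
    simp only [Set.mem_setOf_eq] at hf ⊢
    intro s t hs ht
    simp only [Pi.smul_apply, smul_eq_mul, ← Finset.mul_sum]
    rw [hf s t hs ht]

/-- The well-covered dimension `wcdim(G, F)`. -/
noncomputable def wcdim {V : Type*} (G : SimpleGraph V) (F : Type*) [Field F] : ℕ :=
  Module.finrank F (wcSpace G F)

section Aux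

variable {V : Type*} [Fintype V] {G : SimpleGraph V}

lemma mem_clNbhd' {v u : V} : u ∈ clNbhd G v ↔ u = v ∨ G.Adj v u := by
  simp [clNbhd]

lemma clique_subset_clNbhd' {C : Finset V} {w : V} (hC : G.IsClique (C : Set V))
    (hw : w ∈ C) : C ⊆ clNbhd G w := by
  intro u hu
  rw [mem_clNbhd']
  rcases eq_or_ne u w with rfl | h
  · exact Or.inl rfl
  · exact Or.inr (hC (Finset.mem_coe.mpr hw) (Finset.mem_coe.mpr hu) h.symm)

lemma mem_of_subset_clNbhd' {C : Finset V} {w : V} (hC : IsMaxClique G C)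
    (h : C ⊆ clNbhd G w) : w ∈ C := by
  have hcl : G.IsClique ((insert w C : Finset V) : Set V) := by
    rw [Finset.coe_insert]
    refine hC.1.insert fun b hb hne => ?_
    rcases mem_clNbhd'.mp (h hb) with rfl | hadj
    · exact absurd rfl hne
    · exact hadj
  have := hC.2 (insert w C) hcl (Finset.subset_insert _ _)
  rw [← this]
  exact Finset.mem_insert_self _ _

lemma clique_eq_clNbhd' {v : V} {C : Finset V} (hv : IsSimplicialVertex G v)
    (hC : IsMaxClique G C) (hvC : v ∈ C) : C = clNbhd G v :=
  (hC.2 _ hv.1 (clique_subset_clNbhd' hC.1 hvC)).symm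

end Aux

/-- For any well-covered weighting `f` of a SCCG `G` and any vertex `w`
of the connection set `W`, there is a choice of simplicial vertices, one from each
simplicial clique in the complement of `S({w})` in `C(G)`, such that `f w` is the sum of
the values of `f` at the chosen vertices. -/
theorem sccg_wcw_connection_sum {V : Type*} [Fintype V] (G : SimpleGraph V)
    (hconn : G.Connected) (hG : IsSCCG G) {F : Type*} [Field F] (f : V → F)
    (hf : IsWCW G f) :
    ∀ w ∈ connSet G, ∃ g : Finset V → V,
      (∀ C ∈ simpCliques G \ sFam G {w}, g C ∈ C ∧ IsSimplicialVertex G (g C)) ∧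
      f w = ∑ C ∈ simpCliques G \ sFam G {w}, f (g C) := by
  intro w hw
  have hV : Nonempty V := hconn.nonempty
  -- choose a simplicial vertex in each simplicial clique
  set g : Finset V → V := fun C =>
    if h : ∃ v ∈ C, IsSimplicialVertex G v then h.choose else Classical.arbitrary V with hgdef
  have hsimp : ∀ C ∈ simpCliques G, IsSimplicialClique G C := by
    intro C hC; exact (Finset.mem_filter.mp hC).2
  have hg : ∀ C ∈ simpCliques G, g C ∈ C ∧ IsSimplicialVertex G (g C) := by
    intro C hC
    have h : ∃ v ∈ C, IsSimplicialVertex G v := (hsimp C hC).2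
    simp only [hgdef, dif_pos h]
    exact ⟨h.choose_spec.1, h.choose_spec.2⟩
  have hNg : ∀ C ∈ simpCliques G, C = clNbhd G (g C) := by
    intro C hC
    exact clique_eq_clNbhd' (hg C hC).2 (hsimp C hC).1 (hg C hC).1
  -- g is injective on simplicial cliques
  have ginj : ∀ C ∈ simpCliques G, ∀ D ∈ simpCliques G, g C = g D → C = D := by
    intro C hC D hD hgcd
    rw [hNg C hC, hNg D hD, hgcd]
  -- distinct simplicial cliques have nonadjacent chosen vertices
  have hind : ∀ C ∈ simpCliques G, ∀ D ∈ simpCliques G, ¬ G.Adj (g C) (g D) := by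
    intro C hC D hD hadj
    have hCD : C = D := by
      have hmem : g D ∈ C := by
        rw [hNg C hC, mem_clNbhd']
        exact Or.inr hadj
      rw [hNg D hD]
      exact clique_eq_clNbhd' (hg D hD).2 (hsimp C hC).1 hmem
    subst hCD
    exact G.irrefl hadj
  -- basic facts about S = S({w})
  have hNset : clNbhdSet G {w} = clNbhd G w := Finset.singleton_biUnion
  have hSsub : sFam G {w} ⊆ simpCliques G := Finset.filter_subset _ _
  have hSmem : ∀ C, C ∈ sFam G {w} ↔ C ∈ simpCliques G ∧ ¬ C ⊆ clNbhd G w := by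
    intro C; rw [sFam, Finset.mem_filter, hNset]
  have hwS : ∀ C ∈ sFam G {w}, w ∉ C := by
    intro C hC hwC
    exact ((hSmem C).mp hC).2 (clique_subset_clNbhd' (hsimp C ((hSmem C).mp hC).1).1.1 hwC)
  have hTmem : ∀ C, C ∈ simpCliques G \ sFam G {w} ↔ C ∈ simpCliques G ∧ w ∈ C := by
    intro C
    rw [Finset.mem_sdiff, hSmem]
    constructor
    · rintro ⟨h1, h2⟩
      refine ⟨h1, ?_⟩
      by_contra hwC
      exact h2 ⟨h1, fun hsub => hwC (mem_of_subset_clNbhd' (hsimp C h1).1 hsub)⟩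
    · rintro ⟨h1, h2⟩
      exact ⟨h1, fun h => h.2 (clique_subset_clNbhd' (hsimp C h1).1.1 h2)⟩
  -- w is not adjacent to (and distinct from) g C for C ∈ S
  have hwg : ∀ C ∈ sFam G {w}, w ∉ clNbhd G (g C) := by
    intro C hC hmem
    exact hwS C hC (by rw [hNg C (hSsub hC)]; exact hmem)
  -- the two maximal independent sets
  set I₁ : Finset V := insert w ((sFam G {w}).image g) with hI₁
  set I₂ : Finset V := (simpCliques G).image g with hI₂
  have hwNotIm : w ∉ (sFam G {w}).image g := by
    intro h
    obtain ⟨C, hC, hgC⟩ := Finset.mem_image.mp h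
    exact hwg C hC (by rw [mem_clNbhd', hgC]; exact Or.inl rfl)
  have hI₁indep : IsIndep G I₁ := by
    intro u hu v hv hadj
    rw [hI₁, Finset.mem_insert] at hu hv
    rcases hu with rfl | hu
    · rcases hv with rfl | hv
      · exact G.irrefl hadj
      · obtain ⟨C, hC, rfl⟩ := Finset.mem_image.mp hv
        exact hwg C hC (by rw [mem_clNbhd']; exact Or.inr hadj.symm)
    · obtain ⟨C, hC, rfl⟩ := Finset.mem_image.mp hu
      rcases hv with rfl | hv
      · exact hwg C hC (by rw [mem_clNbhd']; exact Or.inr hadj)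
      · obtain ⟨D, hD, rfl⟩ := Finset.mem_image.mp hv
        exact hind C (hSsub hC) D (hSsub hD) hadj
  have hI₂indep : IsIndep G I₂ := by
    intro u hu v hv hadj
    obtain ⟨C, hC, rfl⟩ := Finset.mem_image.mp hu
    obtain ⟨D, hD, rfl⟩ := Finset.mem_image.mp hv
    exact hind C hC D hD hadj
  -- maximality helper: any vertex independent from a transversal is in it
  have hI₁max : IsMaxIndep G I₁ := by
    refine ⟨hI₁indep, fun t ht hsub => ?_⟩
    refine Finset.Subset.antisymm ?_ hsub
    intro x hx
    obtain ⟨C, hC, hxC⟩ := hG.2 x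
    by_cases hwC : w ∈ C
    · have hwt : w ∈ t := hsub (Finset.mem_insert_self _ _)
      rcases eq_or_ne x w with rfl | hne
      · exact Finset.mem_insert_self _ _
      · exact absurd ((hsimp C hC).1.1 (Finset.mem_coe.mpr hxC)
          (Finset.mem_coe.mpr hwC) hne) (ht x hx w hwt)
    · have hCS : C ∈ sFam G {w} := (hSmem C).mpr
        ⟨hC, fun h => hwC (mem_of_subset_clNbhd' (hsimp C hC).1 h)⟩
      have hgt : g C ∈ t := hsub (Finset.mem_insert_of_mem (Finset.mem_image_of_mem g hCS))
      rcases eq_or_ne x (g C) with rfl | hne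
      · exact Finset.mem_insert_of_mem (Finset.mem_image_of_mem g hCS)
      · exact absurd ((hsimp C hC).1.1 (Finset.mem_coe.mpr hxC)
          (Finset.mem_coe.mpr (hg C hC).1) hne) (ht x hx (g C) hgt)
  have hI₂max : IsMaxIndep G I₂ := by
    refine ⟨hI₂indep, fun t ht hsub => ?_⟩
    refine Finset.Subset.antisymm ?_ hsub
    intro x hx
    obtain ⟨C, hC, hxC⟩ := hG.2 x
    have hgt : g C ∈ t := hsub (Finset.mem_image_of_mem g hC)
    rcases eq_or_ne x (g C) with rfl | hne
    · exact Finset.mem_image_of_mem g hC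
    · exact absurd ((hsimp C hC).1.1 (Finset.mem_coe.mpr hxC)
        (Finset.mem_coe.mpr (hg C hC).1) hne) (ht x hx (g C) hgt)
  -- compute the sums
  have hsum := hf I₁ I₂ hI₁max hI₂max
  have hsum₁ : ∑ v ∈ I₁, f v = f w + ∑ C ∈ sFam G {w}, f (g C) := by
    rw [hI₁, Finset.sum_insert hwNotIm,
      Finset.sum_image (fun C hC D hD h => ginj C (hSsub hC) D (hSsub hD) h)]
  have hsum₂ : ∑ v ∈ I₂, f v
      = ∑ C ∈ simpCliques G \ sFam G {w}, f (g C) + ∑ C ∈ sFam G {w}, f (g C) := by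
    rw [hI₂, Finset.sum_image (fun C hC D hD h => ginj C hC D hD h),
      ← Finset.sum_sdiff hSsub]
  refine ⟨g, fun C hC => hg C ((hTmem C).mp hC).1, ?_⟩
  have : f w + ∑ C ∈ sFam G {w}, f (g C)
      = ∑ C ∈ simpCliques G \ sFam G {w}, f (g C) + ∑ C ∈ sFam G {w}, f (g C) := by
    rw [← hsum₁, ← hsum₂, hsum]
  exact add_right_cancel this
end

section
/- Let 𝒢 be the simplicial clique sum (SCS) of G_1 and G_2, and let F be any field. Then wcdim(𝒢, F) = wcdim(G_1, F) + wcdim(G_2, F) − 1. -/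
/-!
Every maximal independent set (MIS) meets a simplicial clique in exactly one vertex. Hence a MIS
of `𝒢` restricts to MISs of `H₁` and `H₂`, and conversely MISs of `H₁` and `H₂` through the same
vertex of the common clique `K` glue to a MIS of `𝒢`. So extending by zero and adding,
`(f₁, f₂) ↦ f₁ + f₂`, maps `W(H₁) × W(H₂)` into `W(𝒢)`; it is onto (correct a given `g` on `K` by
the weight of the MISs of `H₁` through each vertex of `K`), and its kernel is spanned by
`(1_K, -1_K)`, since a well-covered weighting supported on a simplicial clique is constant on it.
Rank–nullity gives the formula.
-/

open Finset

open scoped Classical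

/-- The finset of vertices of a subgraph `H` that lie in a given set `s` of ambient
vertices, viewed as vertices of `H`. -/
noncomputable def restrictToSub {V : Type*} [Fintype V] {𝒢 : SimpleGraph V}
    (H : 𝒢.Subgraph) (s : Set V) : Finset ↥H.verts :=
  univ.filter (fun x => (x : V) ∈ s)

/-- `𝒢` is the simplicial clique sum (SCS) of its subgraphs `H₁` and `H₂`:
their simplicial clique sets are nonempty, their vertex sets cover `V(𝒢)`, their edge
sets cover `E(𝒢)`, and `V(H₁) ∩ V(H₂)` is a simplicial clique of `H₁`, of `H₂`, and
of `𝒢`. -/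
def IsSCS {V : Type*} [Fintype V] (𝒢 : SimpleGraph V) (H₁ H₂ : 𝒢.Subgraph) : Prop :=
  (simpCliques H₁.coe).Nonempty ∧ (simpCliques H₂.coe).Nonempty ∧
  H₁.verts ∪ H₂.verts = Set.univ ∧
  H₁.edgeSet ∪ H₂.edgeSet = 𝒢.edgeSet ∧
  IsSimplicialClique H₁.coe (restrictToSub H₁ (H₁.verts ∩ H₂.verts)) ∧
  IsSimplicialClique H₂.coe (restrictToSub H₂ (H₁.verts ∩ H₂.verts)) ∧
  IsSimplicialClique 𝒢 (H₁.verts ∩ H₂.verts).toFinset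

/-- A chordal graph: no induced cycles of length at least 4. -/
def IsChordal {V : Type*} (G : SimpleGraph V) : Prop :=
  ∀ n : ℕ, 4 ≤ n → IsEmpty (SimpleGraph.cycleGraph n ↪g G)

section IndependentSets

variable {W : Type*} {G : SimpleGraph W} {M C : Finset W}

theorem IsIndep.insert (hM : IsIndep G M) {v : W} (hv : ∀ u ∈ M, ¬G.Adj v u) :
    IsIndep G (insert v M) := by
  intro a ha b hb
  rcases mem_insert.1 ha with rfl | ha' <;> rcases mem_insert.1 hb with rfl | hb'
  · exact G.irrefl
  · exact hv b hb'
  · exact fun hab => hv a ha' hab.symm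
  · exact hM a ha' b hb'

theorem isMaxIndep_iff : IsMaxIndep G M ↔ IsIndep G M ∧ ∀ v ∉ M, ∃ u ∈ M, G.Adj v u := by
  refine ⟨fun hM => ⟨hM.1, fun v hv => ?_⟩, fun ⟨hind, hdom⟩ => ⟨hind, fun t ht hMt => ?_⟩⟩
  · by_contra! hnadj
    exact hv (hM.2 _ (hM.1.insert hnadj) (subset_insert v M) ▸ mem_insert_self v M)
  · refine (hMt.antisymm fun v hvt => ?_).symm
    by_contra hvM
    obtain ⟨u, huM, hvu⟩ := hdom v hvM
    exact ht v hvt u (hMt huM) hvu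

theorem exists_isMaxIndep_superset [Fintype W] {s : Finset W} (hs : IsIndep G s) :
    ∃ M, IsMaxIndep G M ∧ s ⊆ M := by
  obtain ⟨M, hM, hmax⟩ := exists_max_image ({t | IsIndep G t ∧ s ⊆ t} : Finset (Finset W))
    card ⟨s, by simp [hs]⟩
  simp only [mem_filter, mem_univ, true_and] at hM hmax
  exact ⟨M, ⟨hM.1, fun t ht hMt =>
    (eq_of_subset_of_card_le hMt (hmax t ⟨ht, hM.2.trans hMt⟩)).symm⟩, hM.2⟩

theorem exists_isMaxIndep [Fintype W] (G : SimpleGraph W) : ∃ M, IsMaxIndep G M :=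
  (exists_isMaxIndep_superset (G := G) (s := ∅) (by simp [IsIndep])).imp fun _ hM => hM.1

theorem exists_isMaxIndep_mem [Fintype W] (v : W) : ∃ M, IsMaxIndep G M ∧ v ∈ M :=
  (exists_isMaxIndep_superset (G := G) (s := {v}) (by simp [IsIndep])).imp
    fun _ hM => ⟨hM.1, singleton_subset_iff.1 hM.2⟩

theorem IsIndep.eq_of_isClique (hM : IsIndep G M) (hC : G.IsClique (C : Set W)) {x y : W}
    (hxM : x ∈ M) (hxC : x ∈ C) (hyM : y ∈ M) (hyC : y ∈ C) : x = y := by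
  by_contra hxy
  exact hM x hxM y hyM (hC hxC hyC hxy)

theorem IsIndep.sum_ite_mem_eq {β : Type*} [AddCommMonoid β] [DecidablePred (· ∈ C)]
    (hM : IsIndep G M) (hC : G.IsClique (C : Set W)) {x : W} (hxM : x ∈ M) (hxC : x ∈ C)
    (φ : W → β) : ∑ u ∈ M, (if u ∈ C then φ u else 0) = φ x := by
  rw [sum_eq_single_of_mem x hxM fun y hyM hyx =>
    if_neg fun hyC => hyx (hM.eq_of_isClique hC hyM hyC hxM hxC), if_pos hxC]

theorem isWCW_of_sum_eq {F : Type*} [Field F] {f : W → F} (c : F)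
    (hf : ∀ M, IsMaxIndep G M → ∑ v ∈ M, f v = c) : IsWCW G f :=
  fun s t hs ht => (hf s hs).trans (hf t ht).symm

end IndependentSets

namespace IsSimplicialClique

variable {W : Type*} [Fintype W] {G : SimpleGraph W} {C M : Finset W}

theorem exists_mem_inter (hC : IsSimplicialClique G C) (hM : IsMaxIndep G M) :
    ∃ x ∈ M, x ∈ C := by
  obtain ⟨⟨hCcl, hCmax⟩, v, hvC, hv⟩ := hC
  by_cases hvM : v ∈ M
  · exact ⟨v, hvM, hvC⟩
  obtain ⟨u, huM, hvu⟩ := (isMaxIndep_iff.1 hM).2 v hvM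
  have hCv : clNbhd G v = C := hCmax _ hv.1 fun w hw => by
    by_cases hwv : w = v
    · simp [clNbhd, hwv]
    · simp [clNbhd, hCcl hvC hw (Ne.symm hwv)]
  exact ⟨u, huM, hCv ▸ by simp [clNbhd, hvu]⟩

theorem isWCW_ite {F : Type*} [Field F] [DecidablePred (· ∈ C)] (hC : IsSimplicialClique G C)
    (c : F) :
    IsWCW G (fun u => if u ∈ C then c else 0) :=
  isWCW_of_sum_eq c fun M hM => by
    obtain ⟨x, hxM, hxC⟩ := hC.exists_mem_inter hM
    exact hM.1.sum_ite_mem_eq hC.1.1 hxM hxC _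

theorem eq_of_isWCW {F : Type*} [Field F] (hC : IsSimplicialClique G C) {f : W → F}
    (hf : IsWCW G f) (hsupp : ∀ u ∉ C, f u = 0) {x y : W} (hx : x ∈ C) (hy : y ∈ C) :
    f x = f y := by
  have hsum : ∀ M, IsMaxIndep G M → ∀ z ∈ M, z ∈ C → ∑ u ∈ M, f u = f z :=
    fun M hM z hzM hzC => by
      rw [← hM.1.sum_ite_mem_eq hC.1.1 hzM hzC f]
      exact sum_congr rfl fun u _ => by split_ifs with hu <;> simp [hsupp, hu]
  obtain ⟨P, hP, hxP⟩ := exists_isMaxIndep_mem (G := G) x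
  obtain ⟨Q, hQ, hyQ⟩ := exists_isMaxIndep_mem (G := G) y
  rw [← hsum P hP x hxP hx, ← hsum Q hQ y hyQ hy]
  exact hf P Q hP hQ

end IsSimplicialClique

@[simp]
theorem mem_restrictToSub {V : Type*} [Fintype V] {𝒢 : SimpleGraph V} {H : 𝒢.Subgraph}
    {s : Set V} {x : H.verts} : x ∈ restrictToSub H s ↔ (x : V) ∈ s := by
  simp [restrictToSub]

theorem sum_extend_val_eq {V β : Type*} [Fintype V] [AddCommMonoid β] {𝒢 : SimpleGraph V}
    {H : 𝒢.Subgraph} (f : H.verts → β) (M : Finset V) :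
    ∑ v ∈ M, Function.extend Subtype.val f 0 v = ∑ u ∈ restrictToSub H M, f u := by
  have hM : restrictToSub H M = M.subtype (· ∈ H.verts) := by ext; simp
  calc ∑ v ∈ M, Function.extend Subtype.val f 0 v
      = ∑ v ∈ M with v ∈ H.verts, Function.extend Subtype.val f 0 v :=
        (sum_filter_of_ne fun v _ hv => not_not.1 fun hvH =>
          hv (by simp [Function.extend_val_apply' hvH])).symm
    _ = ∑ u ∈ restrictToSub H M, f u := by
        rw [hM, ← sum_subtype_eq_sum_filter]
        exact sum_congr rfl fun u _ => Function.extend_val_apply u.2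

noncomputable def glueMap {V : Type*} [Fintype V] {𝒢 : SimpleGraph V} (H₁ H₂ : 𝒢.Subgraph)
    (F : Type*) [Field F] : (wcSpace H₁.coe F × wcSpace H₂.coe F) →ₗ[F] V → F :=
  (Function.ExtendByZero.linearMap F Subtype.val ∘ₗ (wcSpace H₁.coe F).subtype).coprod
    (Function.ExtendByZero.linearMap F Subtype.val ∘ₗ (wcSpace H₂.coe F).subtype)

theorem glueMap_apply {V : Type*} [Fintype V] {𝒢 : SimpleGraph V} {H₁ H₂ : 𝒢.Subgraph}
    {F : Type*} [Field F] (p : wcSpace H₁.coe F × wcSpace H₂.coe F) :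
    glueMap H₁ H₂ F p =
      Function.extend Subtype.val p.1.1 0 + Function.extend Subtype.val p.2.1 0 :=
  rfl

namespace IsSCS

variable {V : Type*} [Fintype V] {𝒢 : SimpleGraph V} {H₁ H₂ : 𝒢.Subgraph}
  {F : Type*} [Field F]

theorem symm (h : IsSCS 𝒢 H₁ H₂) : IsSCS 𝒢 H₂ H₁ := by
  obtain ⟨h₁, h₂, hV, hE, hK₁, hK₂, hK⟩ := h
  rw [Set.union_comm] at hV hE
  rw [Set.inter_comm] at hK₁ hK₂
  simp only [Set.inter_comm H₁.verts] at hK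
  exact ⟨h₂, h₁, hV, hE, hK₂, hK₁, hK⟩

theorem mem_or_mem (h : IsSCS 𝒢 H₁ H₂) (v : V) : v ∈ H₁.verts ∨ v ∈ H₂.verts :=
  (Set.ext_iff.1 h.2.2.1 v).2 trivial

theorem adj_or_adj (h : IsSCS 𝒢 H₁ H₂) {u w : V} (huw : 𝒢.Adj u w) :
    H₁.Adj u w ∨ H₂.Adj u w := by
  have : s(u, w) ∈ H₁.edgeSet ∪ H₂.edgeSet := by rw [h.2.2.2.1]; exact huw
  exact this

theorem isSimplicialClique_left (h : IsSCS 𝒢 H₁ H₂) :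
    IsSimplicialClique H₁.coe (restrictToSub H₁ H₂.verts) := by
  convert h.2.2.2.2.1 using 1
  ext x
  simp [x.2]

theorem isSimplicialClique_inter (h : IsSCS 𝒢 H₁ H₂) :
    IsSimplicialClique 𝒢 (H₁.verts ∩ H₂.verts).toFinset :=
  h.2.2.2.2.2.2

theorem adj_of_mem_inter (h : IsSCS 𝒢 H₁ H₂) {u w : V} (hu : u ∈ H₁.verts ∩ H₂.verts)
    (hw : w ∈ H₁.verts ∩ H₂.verts) (huw : u ≠ w) : H₁.Adj u w :=
  h.isSimplicialClique_left.1.1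
    (show (⟨u, hu.1⟩ : H₁.verts) ∈ (restrictToSub H₁ H₂.verts : Set H₁.verts) by simpa using hu.2)
    (show (⟨w, hw.1⟩ : H₁.verts) ∈ (restrictToSub H₁ H₂.verts : Set H₁.verts) by simpa using hw.2)
    (by simpa using huw)

theorem adj_of_adj (h : IsSCS 𝒢 H₁ H₂) {u w : V} (hu : u ∈ H₁.verts) (hw : w ∈ H₁.verts)
    (huw : 𝒢.Adj u w) : H₁.Adj u w :=
  (h.adj_or_adj huw).elim id fun h₂ =>
    h.adj_of_mem_inter ⟨hu, h₂.fst_mem⟩ ⟨hw, h₂.snd_mem⟩ huw.ne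

theorem mem_right_of_adj (h : IsSCS 𝒢 H₁ H₂) {u w : V} (huw : 𝒢.Adj u w)
    (hw : w ∉ H₁.verts) : u ∈ H₂.verts :=
  ((h.adj_or_adj huw).resolve_left fun h₁ => hw h₁.snd_mem).fst_mem

theorem eq_of_mem_right (h : IsSCS 𝒢 H₁ H₂) {P : Finset H₁.verts} (hP : IsIndep H₁.coe P)
    {u w : H₁.verts} (hu : u ∈ P) (hu₂ : (u : V) ∈ H₂.verts) (hw : w ∈ P)
    (hw₂ : (w : V) ∈ H₂.verts) : u = w :=
  hP.eq_of_isClique h.isSimplicialClique_left.1.1 hu (by simpa using hu₂) hw (by simpa using hw₂)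

theorem isMaxIndep_restrictToSub (h : IsSCS 𝒢 H₁ H₂) {M : Finset V}
    (hM : IsMaxIndep 𝒢 M) : IsMaxIndep H₁.coe (restrictToSub H₁ M) := by
  refine isMaxIndep_iff.2 ⟨fun a ha b hb hab => hM.1 a (by simpa using ha) b (by simpa using hb)
    hab.adj_sub, fun u hu => ?_⟩
  obtain ⟨w, hwM, huw⟩ := (isMaxIndep_iff.1 hM).2 u (by simpa using hu)
  by_cases hw : w ∈ H₁.verts
  · exact ⟨⟨w, hw⟩, by simpa using hwM, h.adj_of_adj u.2 hw huw⟩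
  -- now `w ∈ V(H₂) \ V(H₁)`, so `u` lies in the overlap clique, which `M` meets in some `z ≠ u`
  obtain ⟨z, hzM, hzK⟩ := h.isSimplicialClique_inter.exists_mem_inter hM
  rw [Set.mem_toFinset] at hzK
  refine ⟨⟨z, hzK.1⟩, by simpa using hzM,
    h.adj_of_mem_inter ⟨u.2, h.mem_right_of_adj huw hw⟩ hzK fun huz => ?_⟩
  exact hu (by simpa [huz] using hzM)

theorem isMaxIndep_of_restrictToSub (h : IsSCS 𝒢 H₁ H₂) {M : Finset V}
    (h₁ : IsMaxIndep H₁.coe (restrictToSub H₁ M)) (h₂ : IsMaxIndep H₂.coe (restrictToSub H₂ M)) :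
    IsMaxIndep 𝒢 M := by
  refine isMaxIndep_iff.2 ⟨fun u hu w hw huw => ?_, fun v hv => ?_⟩
  · rcases h.adj_or_adj huw with huw | huw
    · exact h₁.1 ⟨u, huw.fst_mem⟩ (by simpa using hu) ⟨w, huw.snd_mem⟩ (by simpa using hw) huw
    · exact h₂.1 ⟨u, huw.fst_mem⟩ (by simpa using hu) ⟨w, huw.snd_mem⟩ (by simpa using hw) huw
  · rcases h.mem_or_mem v with hv₁ | hv₂
    · obtain ⟨u, huM, hvu⟩ := (isMaxIndep_iff.1 h₁).2 ⟨v, hv₁⟩ (by simpa using hv)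
      exact ⟨u, by simpa using huM, hvu.adj_sub⟩
    · obtain ⟨u, huM, hvu⟩ := (isMaxIndep_iff.1 h₂).2 ⟨v, hv₂⟩ (by simpa using hv)
      exact ⟨u, by simpa using huM, hvu.adj_sub⟩

theorem restrictToSub_union (h : IsSCS 𝒢 H₁ H₂) {P₁ : Finset H₁.verts} {P₂ : Finset H₂.verts}
    (hP₂ : IsIndep H₂.coe P₂) {x : V} (hx₁ : x ∈ H₁.verts) (hx₂ : x ∈ H₂.verts)
    (hxP₁ : ⟨x, hx₁⟩ ∈ P₁) (hxP₂ : ⟨x, hx₂⟩ ∈ P₂) :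
    restrictToSub H₁ ↑(P₁.map (.subtype _) ∪ P₂.map (.subtype _)) = P₁ := by
  ext ⟨v, hv₁⟩
  simp only [mem_restrictToSub, coe_union, Set.mem_union, mem_coe, mem_map,
    Function.Embedding.coe_subtype, Subtype.exists, exists_and_right, exists_eq_right]
  refine ⟨fun hv => hv.elim (fun ⟨_, hvP₁⟩ => hvP₁) fun ⟨hv₂, hvP₂⟩ => ?_,
    fun hvP₁ => .inl ⟨hv₁, hvP₁⟩⟩
  obtain rfl : v = x := congrArg Subtype.val (h.symm.eq_of_mem_right hP₂ hvP₂ hv₁ hxP₂ hx₁)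
  exact hxP₁

theorem exists_isMaxIndep_sum_add {β : Type*} [AddCommMonoid β] (h : IsSCS 𝒢 H₁ H₂)
    {P₁ : Finset H₁.verts} {P₂ : Finset H₂.verts} (hP₁ : IsMaxIndep H₁.coe P₁)
    (hP₂ : IsMaxIndep H₂.coe P₂) {x : V} (hx₁ : x ∈ H₁.verts) (hx₂ : x ∈ H₂.verts)
    (hxP₁ : ⟨x, hx₁⟩ ∈ P₁) (hxP₂ : ⟨x, hx₂⟩ ∈ P₂) (g : V → β) :
    ∃ M, IsMaxIndep 𝒢 M ∧ ∑ u ∈ P₁, g u + ∑ u ∈ P₂, g u = ∑ v ∈ M, g v + g x := by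
  set A := P₁.map (.subtype _)
  set B := P₂.map (.subtype _)
  have hA : restrictToSub H₁ ↑(A ∪ B) = P₁ := h.restrictToSub_union hP₂.1 hx₁ hx₂ hxP₁ hxP₂
  have hB : restrictToSub H₂ ↑(A ∪ B) = P₂ := by
    rw [union_comm]
    exact h.symm.restrictToSub_union hP₁.1 hx₂ hx₁ hxP₂ hxP₁
  have hAB : A ∩ B = {x} := by
    refine eq_singleton_iff_unique_mem.2 ⟨mem_inter.2 ⟨mem_map_of_mem _ hxP₁,
      mem_map_of_mem _ hxP₂⟩, fun v hv => ?_⟩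
    obtain ⟨⟨u, huP₁, rfl⟩, ⟨w, hwP₂, hwu⟩⟩ := And.imp mem_map.1 mem_map.1 (mem_inter.1 hv)
    have hu₂ : (u : V) ∈ H₂.verts := by
      simp only [Function.Embedding.coe_subtype] at hwu
      exact hwu ▸ w.2
    exact congrArg Subtype.val (h.eq_of_mem_right hP₁.1 huP₁ hu₂ hxP₁ hx₂)
  refine ⟨A ∪ B, h.isMaxIndep_of_restrictToSub (hA ▸ hP₁) (hB ▸ hP₂), ?_⟩
  rw [← sum_singleton g x, ← hAB, sum_union_inter, sum_map, sum_map]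
  rfl

theorem glueMap_mem_wcSpace (h : IsSCS 𝒢 H₁ H₂) (p : wcSpace H₁.coe F × wcSpace H₂.coe F) :
    glueMap H₁ H₂ F p ∈ wcSpace 𝒢 F := fun M M' hM hM' => by
  simp only [glueMap_apply, Pi.add_apply, sum_add_distrib, sum_extend_val_eq]
  rw [p.1.2 _ _ (h.isMaxIndep_restrictToSub hM) (h.isMaxIndep_restrictToSub hM'),
    p.2.2 _ _ (h.symm.isMaxIndep_restrictToSub hM) (h.symm.isMaxIndep_restrictToSub hM')]

noncomputable def wcGlue (h : IsSCS 𝒢 H₁ H₂) (F : Type*) [Field F] :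
    (wcSpace H₁.coe F × wcSpace H₂.coe F) →ₗ[F] wcSpace 𝒢 F :=
  (glueMap H₁ H₂ F).codRestrict _ h.glueMap_mem_wcSpace

theorem sum_eq_sum_of_mem (h : IsSCS 𝒢 H₁ H₂) {g : V → F} (hg : IsWCW 𝒢 g)
    {P P' : Finset H₁.verts} (hP : IsMaxIndep H₁.coe P) (hP' : IsMaxIndep H₁.coe P') {x : V}
    (hx₁ : x ∈ H₁.verts) (hx₂ : x ∈ H₂.verts) (hxP : ⟨x, hx₁⟩ ∈ P) (hxP' : ⟨x, hx₁⟩ ∈ P') :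
    ∑ u ∈ P, g u = ∑ u ∈ P', g u := by
  obtain ⟨Q, hQ, hxQ⟩ := exists_isMaxIndep_mem (G := H₂.coe) ⟨x, hx₂⟩
  obtain ⟨M, hM, hPQ⟩ := h.exists_isMaxIndep_sum_add hP hQ hx₁ hx₂ hxP hxQ g
  obtain ⟨M', hM', hP'Q⟩ := h.exists_isMaxIndep_sum_add hP' hQ hx₁ hx₂ hxP' hxQ g
  linear_combination hPQ - hP'Q + hg M M' hM hM'

theorem exists_forall_isMaxIndep_sum_eq (h : IsSCS 𝒢 H₁ H₂) {g : V → F} (hg : IsWCW 𝒢 g) :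
    ∃ a : V → F, ∀ P, IsMaxIndep H₁.coe P → ∀ u ∈ P, (u : V) ∈ H₂.verts →
      ∑ w ∈ P, g w = a u := by
  choose N hN huN using fun u : H₁.verts => exists_isMaxIndep_mem (G := H₁.coe) u
  refine ⟨fun v => if hv : v ∈ H₁.verts then ∑ w ∈ N ⟨v, hv⟩, g w else 0,
    fun P hP u huP hu₂ => ?_⟩
  dsimp only
  rw [dif_pos u.2]
  exact h.sum_eq_sum_of_mem hg hP (hN u) u.2 hu₂ huP (huN u)

theorem exists_extend_add_extend_eq (h : IsSCS 𝒢 H₁ H₂) {g : V → F} (hg : IsWCW 𝒢 g) :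
    ∃ f₁ f₂, IsWCW H₁.coe f₁ ∧ IsWCW H₂.coe f₂ ∧
      Function.extend Subtype.val f₁ 0 + Function.extend Subtype.val f₂ 0 = g := by
  -- `a u` is the common weight under `g` of the MISs of `H₁` through `u`; subtracting it on the
  -- overlap makes `f₁` sum to `0`, and adding it back in `f₂` gives the weight of a MIS of `𝒢`.
  obtain ⟨a, ha⟩ := h.exists_forall_isMaxIndep_sum_eq hg
  obtain ⟨M₀, hM₀⟩ := exists_isMaxIndep 𝒢
  have hK₁ := h.isSimplicialClique_left
  have hK₂ := h.symm.isSimplicialClique_left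
  refine ⟨fun u => g u - if u ∈ restrictToSub H₁ H₂.verts then a u else 0,
    fun u => g u + if u ∈ restrictToSub H₂ H₁.verts then a u - g u else 0,
    isWCW_of_sum_eq 0 fun P hP => ?_, isWCW_of_sum_eq (∑ v ∈ M₀, g v) fun P hP => ?_, ?_⟩
  · obtain ⟨y, hyP, hyK⟩ := hK₁.exists_mem_inter hP
    rw [sum_sub_distrib, hP.1.sum_ite_mem_eq hK₁.1.1 hyP hyK,
      ha P hP y hyP (by simpa using hyK), sub_self]
  · obtain ⟨y, hyP, hyK⟩ := hK₂.exists_mem_inter hP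
    have hy₁ : (y : V) ∈ H₁.verts := by simpa using hyK
    obtain ⟨Q, hQ, hyQ⟩ := exists_isMaxIndep_mem (G := H₁.coe) ⟨y, hy₁⟩
    obtain ⟨M, hM, hQP⟩ := h.exists_isMaxIndep_sum_add hQ hP hy₁ y.2 hyQ hyP g
    rw [sum_add_distrib, hP.1.sum_ite_mem_eq hK₂.1.1 hyP hyK, ← ha Q hQ _ hyQ y.2,
      hg M₀ M hM₀ hM]
    linear_combination hQP
  · funext v
    by_cases hv₁ : v ∈ H₁.verts <;> by_cases hv₂ : v ∈ H₂.verts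
    any_goals simp [Function.extend_val_apply, hv₁, hv₂]
    · exact ((h.mem_or_mem v).elim hv₁ hv₂).elim

theorem wcGlue_surjective (h : IsSCS 𝒢 H₁ H₂) : Function.Surjective (h.wcGlue F) := by
  rintro ⟨g, hg⟩
  obtain ⟨f₁, f₂, hf₁, hf₂, hfg⟩ := h.exists_extend_add_extend_eq hg
  exact ⟨(⟨f₁, hf₁⟩, ⟨f₂, hf₂⟩), Subtype.ext hfg⟩

noncomputable def cliqueIndicatorPair (h : IsSCS 𝒢 H₁ H₂) (F : Type*) [Field F] :
    wcSpace H₁.coe F × wcSpace H₂.coe F :=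
  (⟨_, h.isSimplicialClique_left.isWCW_ite (1 : F)⟩,
    ⟨_, h.symm.isSimplicialClique_left.isWCW_ite (-1 : F)⟩)

theorem glueMap_cliqueIndicatorPair (h : IsSCS 𝒢 H₁ H₂) :
    glueMap H₁ H₂ F (h.cliqueIndicatorPair F) = 0 := by
  funext v
  by_cases hv₁ : v ∈ H₁.verts <;> by_cases hv₂ : v ∈ H₂.verts <;>
    simp [glueMap_apply, cliqueIndicatorPair, Function.extend_val_apply, hv₁, hv₂]

theorem eq_smul_cliqueIndicatorPair (h : IsSCS 𝒢 H₁ H₂)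
    {p : wcSpace H₁.coe F × wcSpace H₂.coe F} (hp : glueMap H₁ H₂ F p = 0) {x₀ : H₁.verts}
    (hx₀ : (x₀ : V) ∈ H₂.verts) : p = p.1.1 x₀ • h.cliqueIndicatorPair F := by
  have hsum : ∀ v,
      Function.extend Subtype.val p.1.1 0 v + Function.extend Subtype.val p.2.1 0 v = 0 :=
    congrFun hp
  have hp₁ : ∀ u : H₁.verts, (u : V) ∉ H₂.verts → p.1.1 u = 0 := fun u hu => by
    simpa [Function.extend_val_apply, hu] using hsum u
  have hp₂ : ∀ u : H₂.verts, (u : V) ∉ H₁.verts → p.2.1 u = 0 := fun u hu => by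
    simpa [Function.extend_val_apply, hu] using hsum u
  have hconst : ∀ u : H₁.verts, (u : V) ∈ H₂.verts → p.1.1 u = p.1.1 x₀ := fun u hu =>
    h.isSimplicialClique_left.eq_of_isWCW p.1.2 (fun w hw => hp₁ w (by simpa using hw))
      (by simpa using hu) (by simpa using hx₀)
  ext u
  · by_cases hu : (u : V) ∈ H₂.verts
    · simp [cliqueIndicatorPair, hu, hconst]
    · simp [cliqueIndicatorPair, hu, hp₁]
  · by_cases hu : (u : V) ∈ H₁.verts
    · have := hsum u
      simp [Function.extend_val_apply, hu] at this
      simp [cliqueIndicatorPair, hu, ← hconst ⟨u, hu⟩ u.2]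
      linear_combination this
    · simp [cliqueIndicatorPair, hu, hp₂]

theorem ker_wcGlue (h : IsSCS 𝒢 H₁ H₂) :
    LinearMap.ker (h.wcGlue F) = F ∙ h.cliqueIndicatorPair F := by
  obtain ⟨x₀, hx₀, -⟩ := h.isSimplicialClique_left.2
  refine le_antisymm (fun p hp => ?_) ((Submodule.span_singleton_le_iff_mem _ _).2 ?_)
  · exact Submodule.mem_span_singleton.2 ⟨_, (h.eq_smul_cliqueIndicatorPair
      (congrArg Subtype.val (LinearMap.mem_ker.1 hp)) (by simpa using hx₀)).symm⟩
  · exact LinearMap.mem_ker.2 (Subtype.ext h.glueMap_cliqueIndicatorPair)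

theorem cliqueIndicatorPair_ne_zero (h : IsSCS 𝒢 H₁ H₂) : h.cliqueIndicatorPair F ≠ 0 := by
  obtain ⟨x₀, hx₀, -⟩ := h.isSimplicialClique_left.2
  intro h0
  have := congrFun (congrArg (fun p => p.1.1) h0) x₀
  simp [cliqueIndicatorPair, mem_restrictToSub.1 hx₀] at this

end IsSCS

theorem scs_wcdim_general {V : Type*} [Fintype V] (𝒢 : SimpleGraph V)
    (H₁ H₂ : 𝒢.Subgraph) (hscs : IsSCS 𝒢 H₁ H₂)
    (F : Type*) [Field F] :
    wcdim 𝒢 F + 1 = wcdim H₁.coe F + wcdim H₂.coe F := by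
  have h := LinearMap.finrank_range_add_finrank_ker (hscs.wcGlue F)
  rwa [LinearMap.range_eq_top.2 hscs.wcGlue_surjective, finrank_top, hscs.ker_wcGlue,
    finrank_span_singleton hscs.cliqueIndicatorPair_ne_zero, Module.finrank_prod] at h

/-- For a simplicial clique sum `𝒢` of `G₁` and `G₂` and any field `F`,
`wcdim(𝒢, F) = wcdim(G₁, F) + wcdim(G₂, F) - 1` (stated additively to avoid truncated
natural subtraction). -/
theorem scs_wcdim {V : Type*} [Fintype V] (𝒢 : SimpleGraph V)
    (hconn : 𝒢.Connected) (H₁ H₂ : 𝒢.Subgraph) (hscs : IsSCS 𝒢 H₁ H₂)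
    (F : Type*) [Field F] :
    wcdim 𝒢 F + 1 = wcdim H₁.coe F + wcdim H₂.coe F :=
  scs_wcdim_general 𝒢 H₁ H₂ hscs F
end
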